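/- arXiv:1412.6858 — 3 statements merged into one kernel-verified Lean document; each statement's English description precedes it below -/
import Mathlib

section
/- Let J : ℝⁿ → ℝ ∪ {+∞} be a proper lower semicontinuous convex function, γ > 0, and x, p ∈ ℝⁿ with p = prox_{γJ}(x). Let T be a linear subspace of ℝⁿ such that u − v ∈ T^⊥ for all u, v ∈ ∂J(p), and suppose ∂J(p) is nonempty; let e = P_T(u) for some (equivalently, any) u ∈ ∂J(p), where P_T is the orthogonal projection onto T. Then p = (p + P_T(x − p)) − γ e; equivalently, P_T(x − p) = γ e. (This is the affine-manifold case of the proximity-operator formula for partly smooth functions: p equals the projection of x onto the affine subspace p + T minus γ e.) -/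
/-!
Comparing the prox objective at `p` with its value at `p + t (y - p)` and using convexity gives
`⟨x - p, y - p⟩ - t ‖y - p‖² / 2 ≤ γ (J y - J p)` for `t ∈ (0, 1]`; letting `t → 0` shows that
`γ⁻¹ (x - p)` is a subgradient of `J` at `p`. It therefore differs from `u` by a vector of `Tᗮ`,
so both have the same projection onto `T`.
-/

noncomputable section
open Filter Topology

/-- `ℝⁿ` as a Euclidean space. -/
abbrev E (n : ℕ) := EuclideanSpace ℝ (Fin n)

/-- `u ∈ ∂J(p)`: `u` is a subgradient of `J` at `p`. -/
def IsSubgrad {n : ℕ} (J : E n → EReal) (p u : E n) : Prop :=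
  ∀ y : E n, J p + ((inner ℝ u (y - p) : ℝ) : EReal) ≤ J y

/-- `p = prox_{γJ}(x)`: `p` minimizes `y ↦ γ J(y) + ½‖y − x‖²`. -/
def IsProx {n : ℕ} (J : E n → EReal) (γ : ℝ) (x p : E n) : Prop :=
  ∀ y : E n, (γ : EReal) * J p + ((‖p - x‖ ^ 2 / 2 : ℝ) : EReal)
    ≤ (γ : EReal) * J y + ((‖y - x‖ ^ 2 / 2 : ℝ) : EReal)

/-- Convexity of an `EReal`-valued function. -/
def ConvexE {n : ℕ} (J : E n → EReal) : Prop :=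
  ∀ x y : E n, ∀ a b : ℝ, 0 ≤ a → 0 ≤ b → a + b = 1 →
    J (a • x + b • y) ≤ (a : EReal) * J x + (b : EReal) * J y

/-- Proper: takes values in `ℝ ∪ {+∞}` (never `⊥`) and is not identically `+∞`. -/
def ProperE {n : ℕ} (J : E n → EReal) : Prop :=
  (∃ x, J x ≠ ⊤) ∧ ∀ x, J x ≠ ⊥

/-- Orthogonal projection onto a subspace `T`, as an endomorphism of `ℝⁿ`. -/
def projCLM {n : ℕ} (T : Submodule ℝ (E n)) : E n →L[ℝ] E n :=
  T.subtypeL.comp (T.orthogonalProjectionOnto)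

lemma le_of_forall_sub_mul_le {a b c : ℝ} (h : ∀ t : ℝ, 0 < t → t ≤ 1 → a - t * c ≤ b) :
    a ≤ b := by
  have hlim : Tendsto (fun t : ℝ => a - t * c) (𝓝[>] 0) (𝓝 a) := by
    have : Tendsto (fun t : ℝ => a - t * c) (𝓝 0) (𝓝 (a - 0 * c)) :=
      tendsto_const_nhds.sub (tendsto_id.mul_const c)
    simpa using this.mono_left nhdsWithin_le_nhds
  refine le_of_tendsto hlim ?_
  filter_upwards [Ioc_mem_nhdsGT one_pos] with t ht using h t ht.1 ht.2

lemma EReal.exists_coe_eq {a : EReal} (htop : a ≠ ⊤) (hbot : a ≠ ⊥) : ∃ r : ℝ, a = r :=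
  ⟨a.toReal, (EReal.coe_toReal htop hbot).symm⟩

namespace IsProx

variable {n : ℕ} {J : E n → EReal} {γ : ℝ} {x p : E n}

theorem ne_top (hproper : ProperE J) (hγ : 0 < γ) (hp : IsProx J γ x p) : J p ≠ ⊤ := by
  obtain ⟨⟨y, hy⟩, hbot⟩ := hproper
  obtain ⟨Jy, hJy⟩ := EReal.exists_coe_eq hy (hbot y)
  intro htop
  have h := hp y
  rw [htop, EReal.coe_mul_top_of_pos hγ, EReal.top_add_coe, hJy,
    ← EReal.coe_mul, ← EReal.coe_add, top_le_iff] at h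
  exact EReal.coe_ne_top _ h

lemma inner_sub_mul_le (hconv : ConvexE J) (hγ : 0 < γ) (hp : IsProx J γ x p) {y : E n}
    {Jp Jy : ℝ} (hJp : J p = Jp) (hJy : J y = Jy) {t : ℝ} (ht : 0 < t) (ht1 : t ≤ 1) :
    inner ℝ (x - p) (y - p) - t * (‖y - p‖ ^ 2 / 2) ≤ γ * (Jy - Jp) := by
  have hconvt := hconv y p t (1 - t) ht.le (by linarith) (by ring)
  rw [hJp, hJy] at hconvt
  have hprox := hp (t • y + (1 - t) • p)
  rw [hJp] at hprox
  have hereal : (γ : EReal) * Jp + ((‖p - x‖ ^ 2 / 2 : ℝ) : EReal)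
      ≤ (γ : EReal) * ((t : EReal) * Jy + ((1 - t : ℝ) : EReal) * Jp)
        + ((‖t • y + (1 - t) • p - x‖ ^ 2 / 2 : ℝ) : EReal) :=
    hprox.trans (add_le_add_left (mul_le_mul_of_nonneg_left hconvt (by exact_mod_cast hγ.le)) _)
  have hreal : γ * Jp + ‖p - x‖ ^ 2 / 2
      ≤ γ * (t * Jy + (1 - t) * Jp) + ‖t • y + (1 - t) • p - x‖ ^ 2 / 2 := by
    exact_mod_cast hereal
  have hnorm : ‖t • y + (1 - t) • p - x‖ ^ 2
      = ‖p - x‖ ^ 2 - 2 * t * inner ℝ (x - p) (y - p) + t ^ 2 * ‖y - p‖ ^ 2 := by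
    rw [show t • y + (1 - t) • p - x = -(x - p) + t • (y - p) by module, norm_add_sq_real,
      norm_neg, norm_sub_rev x p, inner_neg_left, real_inner_smul_right, norm_smul,
      Real.norm_of_nonneg ht.le]
    ring
  rw [hnorm] at hreal
  have hscaled : t * (inner ℝ (x - p) (y - p) - t * (‖y - p‖ ^ 2 / 2)) ≤ t * (γ * (Jy - Jp)) := by
    linarith
  exact le_of_mul_le_mul_left hscaled ht

theorem isSubgrad (hproper : ProperE J) (hconv : ConvexE J) (hγ : 0 < γ)
    (hp : IsProx J γ x p) : IsSubgrad J p (γ⁻¹ • (x - p)) := by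
  obtain ⟨Jp, hJp⟩ := EReal.exists_coe_eq (hp.ne_top hproper hγ) (hproper.2 p)
  intro y
  rcases eq_or_ne (J y) ⊤ with hy | hy
  · rw [hy]
    exact le_top
  obtain ⟨Jy, hJy⟩ := EReal.exists_coe_eq hy (hproper.2 y)
  have hinner : inner ℝ (x - p) (y - p) ≤ γ * (Jy - Jp) :=
    le_of_forall_sub_mul_le fun t ht ht1 => hp.inner_sub_mul_le hconv hγ hJp hJy ht ht1
  rw [hJp, hJy, real_inner_smul_left, ← EReal.coe_add, EReal.coe_le_coe_iff]
  have : γ⁻¹ * inner ℝ (x - p) (y - p) ≤ Jy - Jp := by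
    rwa [inv_mul_le_iff₀ hγ]
  linarith

end IsProx

lemma projCLM_eq_of_sub_mem_orthogonal {n : ℕ} {T : Submodule ℝ (E n)} {v w : E n}
    (h : v - w ∈ Tᗮ) : projCLM T v = projCLM T w := by
  rw [← sub_eq_zero, ← map_sub]
  simp [projCLM, Submodule.orthogonalProjectionOnto_apply_of_mem_orthogonal h]

theorem statement0_general {n : ℕ} (J : E n → EReal)
    (hproper : ProperE J) (hconv : ConvexE J)
    (γ : ℝ) (hγ : 0 < γ) (x p : E n) (hp : IsProx J γ x p)
    (T : Submodule ℝ (E n))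
    (hT : ∀ u v : E n, IsSubgrad J p u → IsSubgrad J p v → u - v ∈ Tᗮ)
    (u : E n) (hu : IsSubgrad J p u) :
    projCLM T (x - p) = γ • projCLM T u ∧
      p = (p + projCLM T (x - p)) - γ • projCLM T u := by
  have hproj : projCLM T u = γ⁻¹ • projCLM T (x - p) := by
    rw [projCLM_eq_of_sub_mem_orthogonal (hT u _ hu (hp.isSubgrad hproper hconv hγ)), map_smul]
  have h : projCLM T (x - p) = γ • projCLM T u := by
    rw [hproj, smul_inv_smul₀ hγ.ne']
  exact ⟨h, by rw [h]; abel⟩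

/-- Affine-manifold case of the proximity-operator formula: if `J` is proper
lsc convex, `p = prox_{γJ}(x)`, all differences of subgradients of `J` at `p` lie in `T^⊥`,
and `e = P_T u` for a subgradient `u ∈ ∂J(p)`, then `P_T(x − p) = γ e`, equivalently
`p = (p + P_T(x − p)) − γ e`. -/
theorem statement0 {n : ℕ} (J : E n → EReal)
    (hproper : ProperE J) (hlsc : LowerSemicontinuous J) (hconv : ConvexE J)
    (γ : ℝ) (hγ : 0 < γ) (x p : E n) (hp : IsProx J γ x p)
    (T : Submodule ℝ (E n))
    (hT : ∀ u v : E n, IsSubgrad J p u → IsSubgrad J p v → u - v ∈ Tᗮ)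
    (u : E n) (hu : IsSubgrad J p u) :
    projCLM T (x - p) = γ • projCLM T u ∧
      p = (p + projCLM T (x - p)) - γ • projCLM T u :=
  statement0_general J hproper hconv γ hγ x p hp T hT u hu

end
end

section
/- Let T_J and T_G be linear subspaces of ℝⁿ with orthogonal projections P_{T_J}, P_{T_G}, and let S_J = T_J^⊥, S_G = T_G^⊥ with projections P_{S_J}, P_{S_G}. Then the linear map M = I + 2 P_{T_G} P_{T_J} − P_{T_G} − P_{T_J} satisfies M = P_{T_G} P_{T_J} + P_{S_G} P_{S_J}, and its fixed-point set is Fix M = (T_J ∩ T_G) ⊕ (S_J ∩ S_G) (an orthogonal direct sum of subspaces). -/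
noncomputable section
open Filter Topology

/-- A linear map is symmetric positive semidefinite. -/
def IsSymPSD {n : ℕ} (A : E n →L[ℝ] E n) : Prop :=
  (∀ x y : E n, (inner ℝ (A x) y : ℝ) = inner ℝ x (A y)) ∧ ∀ x : E n, (0 : ℝ) ≤ inner ℝ (A x) x

/-- `W = P_T ∘ (I + P_T ∘ H ∘ P_T)⁻¹ ∘ P_T`, the building block of the Douglas–Rachford
fixed-point matrix (`Ring.inverse` is the genuine inverse since `I + P_T H P_T` is
invertible for symmetric positive semidefinite `H`). -/
def Wop {n : ℕ} (T : Submodule ℝ (E n)) (H : E n →L[ℝ] E n) : E n →L[ℝ] E n :=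
  projCLM T * Ring.inverse (1 + projCLM T * H * projCLM T) * projCLM T

/-- The Douglas–Rachford fixed-point matrix `M = I + 2 W_G W_J − W_G − W_J`. -/
def Mop {n : ℕ} (TJ TG : Submodule ℝ (E n)) (HJ HG : E n →L[ℝ] E n) : E n →L[ℝ] E n :=
  1 + (2 : ℝ) • (Wop TG HG * Wop TJ HJ) - Wop TG HG - Wop TJ HJ

/-- The relaxed matrix `M_λ = (1 − λ) I + λ M`. -/
def Mlam {n : ℕ} (lam : ℝ) (TJ TG : Submodule ℝ (E n)) (HJ HG : E n →L[ℝ] E n) :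
    E n →L[ℝ] E n :=
  (1 - lam) • (1 : E n →L[ℝ] E n) + lam • Mop TJ TG HJ HG

/-- The fixed-point set `Fix A = {x | A x = x}` as a submodule, i.e. `ker (A − I)`. -/
def FixM {n : ℕ} (A : E n →L[ℝ] E n) : Submodule ℝ (E n) :=
  LinearMap.ker ((A - 1 : E n →L[ℝ] E n) : E n →ₗ[ℝ] E n)

/-- `M^∞`: the orthogonal projection onto `Fix M`. -/
def Minf {n : ℕ} (TJ TG : Submodule ℝ (E n)) (HJ HG : E n →L[ℝ] E n) : E n →L[ℝ] E n :=
  projCLM (FixM (Mop TJ TG HJ HG))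

/-- The spectral radius of an endomorphism of `ℝⁿ`: the supremum of the moduli of the
complex eigenvalues (eigenvalues of the complexified matrix). -/
def specRad {n : ℕ} (A : E n →L[ℝ] E n) : ℝ :=
  sSup ((fun z : ℂ => ‖z‖) ''
    spectrum ℂ (((LinearMap.toMatrix (EuclideanSpace.basisFun (Fin n) ℝ).toBasis
      (EuclideanSpace.basisFun (Fin n) ℝ).toBasis) A.toLinearMap).map (algebraMap ℝ ℂ)))

/-- The cosine of the Friedrichs angle between two subspaces `U` and `V`. -/
def cF {n : ℕ} (U V : Submodule ℝ (E n)) : ℝ :=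
  sSup {r : ℝ | ∃ u v : E n, u ∈ U ⊓ (U ⊓ V)ᗮ ∧ v ∈ V ⊓ (U ⊓ V)ᗮ ∧
    ‖u‖ ≤ 1 ∧ ‖v‖ ≤ 1 ∧ r = (inner ℝ u v : ℝ)}

/-! The identity is ring arithmetic once `P_{Tᗮ} = 1 - P_T`. For the fixed points, write
`M = P_K P_L + P_{Kᗮ} P_{Lᗮ}`. Applying `P_{Kᗮ}` to `M x = x` kills the first summand and gives
`P_{Kᗮ} P_{Lᗮ} x = P_{Kᗮ} x`, i.e. `P_{Kᗮ} P_L x = 0`, so `P_L x ∈ K`. The same argument for the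
pair `(Kᗮ, Lᗮ)` gives `P_{Lᗮ} x ∈ Kᗮ`, and `x = P_L x + P_{Lᗮ} x` is the required decomposition. -/

namespace Submodule

variable {𝕜 V : Type*} [RCLike 𝕜] [NormedAddCommGroup V] [InnerProductSpace 𝕜 V]
  (K L : Submodule 𝕜 V) [K.HasOrthogonalProjection] [L.HasOrthogonalProjection]

theorem starProjection_orthogonal_orthogonal : Kᗮᗮ.starProjection = K.starProjection := by
  rw [starProjection_orthogonal', starProjection_orthogonal', sub_sub_cancel]

theorem starProjection_mul_add_starProjection_orthogonal_mul :
    K.starProjection * L.starProjection + Kᗮ.starProjection * Lᗮ.starProjection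
      = 1 + (2 : 𝕜) • (K.starProjection * L.starProjection) - K.starProjection
        - L.starProjection := by
  rw [starProjection_orthogonal', starProjection_orthogonal', two_smul]
  noncomm_ring

theorem starProjection_apply_mem_of_starProjection_mul_add_apply_eq_self {x : V}
    (hx : K.starProjection (L.starProjection x) + Kᗮ.starProjection (Lᗮ.starProjection x) = x) :
    L.starProjection x ∈ K := by
  have hperp : Kᗮ.starProjection (Lᗮ.starProjection x) = Kᗮ.starProjection x :=
    calc Kᗮ.starProjection (Lᗮ.starProjection x)
        = Kᗮ.starProjection (K.starProjection (L.starProjection x)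
            + Kᗮ.starProjection (Lᗮ.starProjection x)) := by
          rw [map_add, starProjection_orthogonal_apply_eq_zero (K.starProjection_apply_mem _),
            zero_add, starProjection_eq_self_iff.mpr (Kᗮ.starProjection_apply_mem _)]
      _ = Kᗮ.starProjection x := by rw [hx]
  rw [starProjection_orthogonal_val (K := L), map_sub] at hperp
  rw [← K.orthogonal_orthogonal, ← starProjection_apply_eq_zero_iff]
  exact sub_eq_self.mp hperp

theorem ker_starProjection_mul_add_starProjection_orthogonal_mul_sub_one :
    LinearMap.ker ((K.starProjection * L.starProjection + Kᗮ.starProjection * Lᗮ.starProjection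
      - 1 : V →L[𝕜] V) : V →ₗ[𝕜] V) = (L ⊓ K) ⊔ (Lᗮ ⊓ Kᗮ) := by
  apply le_antisymm
  · intro x hx
    have hfix : K.starProjection (L.starProjection x)
        + Kᗮ.starProjection (Lᗮ.starProjection x) = x := by
      simpa [sub_eq_zero] using hx
    have hL : L.starProjection x ∈ K :=
      starProjection_apply_mem_of_starProjection_mul_add_apply_eq_self K L hfix
    have hLperp : Lᗮ.starProjection x ∈ Kᗮ :=
      starProjection_apply_mem_of_starProjection_mul_add_apply_eq_self Kᗮ Lᗮ
        (by rwa [starProjection_orthogonal_orthogonal, starProjection_orthogonal_orthogonal,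
          add_comm])
    rw [← L.starProjection_add_starProjection_orthogonal x]
    exact add_mem_sup ⟨L.starProjection_apply_mem x, hL⟩ ⟨Lᗮ.starProjection_apply_mem x, hLperp⟩
  · refine sup_le (fun x ⟨hxL, hxK⟩ => ?_) (fun x ⟨hxL, hxK⟩ => ?_) <;>
      simp only [LinearMap.mem_ker, ContinuousLinearMap.toLinearMap_sub, LinearMap.sub_apply,
        ContinuousLinearMap.coe_coe, add_apply, mul_apply_eq_comp, one_apply_eq_self, sub_eq_zero]
    · rw [starProjection_eq_self_iff.mpr hxL, starProjection_eq_self_iff.mpr hxK,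
        starProjection_orthogonal_apply_eq_zero hxL, map_zero, add_zero]
    · rw [starProjection_eq_self_iff.mpr hxL, starProjection_eq_self_iff.mpr hxK,
        L.starProjection_apply_eq_zero_iff.mpr hxL, map_zero, zero_add]

end Submodule

theorem projCLM_eq_starProjection {n : ℕ} (T : Submodule ℝ (E n)) :
    projCLM T = T.starProjection := rfl

/-- In the polyhedral case (`W_G = P_{T_G}`, `W_J = P_{T_J}`),
`M = I + 2 P_{T_G} P_{T_J} − P_{T_G} − P_{T_J} = P_{T_G} P_{T_J} + P_{S_G} P_{S_J}`, and
`Fix M = (T_J ∩ T_G) ⊕ (S_J ∩ S_G)`, an orthogonal direct sum. -/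
theorem statement12 {n : ℕ} (TJ TG : Submodule ℝ (E n)) :
    1 + (2 : ℝ) • (projCLM TG * projCLM TJ) - projCLM TG - projCLM TJ
      = projCLM TG * projCLM TJ + projCLM TGᗮ * projCLM TJᗮ ∧
    FixM (projCLM TG * projCLM TJ + projCLM TGᗮ * projCLM TJᗮ)
      = (TJ ⊓ TG) ⊔ (TJᗮ ⊓ TGᗮ) ∧
    (∀ u ∈ TJ ⊓ TG, ∀ v ∈ TJᗮ ⊓ TGᗮ, (inner ℝ u v : ℝ) = 0) := by
  simp only [projCLM_eq_starProjection]
  exact ⟨(TG.starProjection_mul_add_starProjection_orthogonal_mul TJ).symm,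
    TG.ker_starProjection_mul_add_starProjection_orthogonal_mul_sub_one TJ,
    fun u hu v hv => hv.1 u hu.1⟩
end
end

section
/- Global convergence of the relaxed Douglas–Rachford iteration: let J, G : ℝⁿ → ℝ ∪ {+∞} be proper lower semicontinuous convex functions, γ > 0, and let (λ_k) ⊆ (0,2] satisfy Σ_k λ_k(2−λ_k) = +∞. Let sequences (z^k), (x^k), (v^k) be generated by: v^{k+1} = prox_{γG}(2x^k − z^k); z^{k+1} = (1−λ_k) z^k + λ_k (z^k + v^{k+1} − x^k); x^{k+1} = prox_{γJ}(z^{k+1}). Assume the Douglas–Rachford operator B = ½(R_{γG} ∘ R_{γJ} + I), with R_{γJ} = 2 prox_{γJ} − I and R_{γG} = 2 prox_{γG} − I, has at least one fixed point. Then z^k converges to some z* with B(z*) = z*, x^k and v^k both converge to x* := prox_{γJ}(z*), and x* is a global minimizer of J + G, i.e., J(x*) + G(x*) ≤ J(y) + G(y) for all y ∈ ℝⁿ. -/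
/-!
In the variable `z`, the relaxed Douglas–Rachford update is the Krasnosel'skii–Mann iteration
`z ↦ z + (λ/2) (T z - z)` of `T = R_{γG} ∘ R_{γJ}`. Proximity operators of proper convex
functions are firmly nonexpansive, so their reflections, and hence `T`, are nonexpansive.
For a fixed point `u` of `T`, the identity
`‖(1 - t) a + t b‖² = (1 - t) ‖a‖² + t ‖b‖² - t (1 - t) ‖b - a‖²` shows that each step decreases
`‖z - u‖²` by at least `α (1 - α) ‖T z - z‖²`. The residuals `‖T z - z‖` are nonincreasing and
`Σ α (1 - α) = ∞`, so they tend to `0`; a cluster point, which exists in finite dimension, is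
then a fixed point, and the monotonicity of the distances to it gives convergence of the whole
sequence. At a fixed point `z*`, `x* = prox_{γJ} z* = prox_{γG} (2 x* - z*)`, so
`(z* - x*) / γ ∈ ∂J(x*)` and its negative lies in `∂G(x*)`; hence `x*` minimizes `J + G`.
-/

noncomputable section
open Filter Topology

open Finset Function

section Reflection

variable {M : Type*} [AddCommGroup M] [Module ℝ M]

def reflected (p : M → M) : M → M := fun u => (2 : ℝ) • p u - u

theorem reflected_reflected_eq_self_iff {p q : M → M} {u : M} :
    reflected q (reflected p u) = u ↔ q (reflected p u) = p u := by
  have h : reflected q (reflected p u) - u = (2 : ℝ) • (q (reflected p u) - p u) := by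
    simp only [reflected]; module
  rw [← sub_eq_zero, h, smul_eq_zero, sub_eq_zero]
  norm_num

theorem half_smul_add_eq_self_iff {a b : M} : (1 / 2 : ℝ) • (a + b) = b ↔ a = b := by
  constructor
  · intro h
    calc a = (2 : ℝ) • ((1 / 2 : ℝ) • (a + b)) - b := by module
      _ = b := by rw [h]; module
  · rintro rfl
    module

end Reflection

section FirmlyNonexpansive

variable {F : Type*} [NormedAddCommGroup F] [InnerProductSpace ℝ F]

theorem lipschitzWith_one_of_firmly_nonexpansive {p : F → F}
    (hp : ∀ a b, ‖p a - p b‖ ^ 2 ≤ inner ℝ (p a - p b) (a - b)) : LipschitzWith 1 p := by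
  refine LipschitzWith.mk_one fun a b => ?_
  rw [dist_eq_norm, dist_eq_norm]
  have := (hp a b).trans (real_inner_le_norm _ _)
  nlinarith [norm_nonneg (p a - p b), norm_nonneg (a - b)]

theorem lipschitzWith_one_reflected {p : F → F}
    (hp : ∀ a b, ‖p a - p b‖ ^ 2 ≤ inner ℝ (p a - p b) (a - b)) :
    LipschitzWith 1 (reflected p) := by
  refine LipschitzWith.mk_one fun a b => ?_
  rw [dist_eq_norm, dist_eq_norm]
  have hsub : reflected p a - reflected p b = (2 : ℝ) • (p a - p b) - (a - b) := by
    simp only [reflected]; module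
  refine le_of_pow_le_pow_left₀ two_ne_zero (norm_nonneg _) ?_
  rw [hsub, norm_sub_sq_real, real_inner_smul_left, norm_smul, mul_pow, Real.norm_two]
  linarith [hp a b]

end FirmlyNonexpansive

section KrasnoselskiiMann

theorem tendsto_zero_of_antitone_of_sum_mul_le {c f : ℕ → ℝ} {B : ℝ} (hc : ∀ k, 0 ≤ c k)
    (hf : Antitone f) (hf0 : ∀ k, 0 ≤ f k) (hsum : ∀ N, ∑ k ∈ range N, c k * f k ≤ B)
    (hdiv : Tendsto (fun N => ∑ k ∈ range N, c k) atTop atTop) :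
    Tendsto f atTop (𝓝 0) := by
  have hbound : ∀ᶠ N in atTop, f N ≤ B / ∑ k ∈ range N, c k := by
    filter_upwards [hdiv.eventually_gt_atTop 0] with N hN
    rw [le_div_iff₀ hN, mul_sum]
    refine le_trans (sum_le_sum fun k hk => ?_) (hsum N)
    rw [mul_comm]
    exact mul_le_mul_of_nonneg_left (hf (mem_range.mp hk).le) (hc k)
  exact tendsto_of_tendsto_of_tendsto_of_le_of_le' tendsto_const_nhds
    (tendsto_const_nhds.div_atTop hdiv) (Eventually.of_forall hf0) hbound

theorem tendsto_of_antitone_dist_of_subseq {X : Type*} [PseudoMetricSpace X] {w : ℕ → X}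
    {u : X} (hw : Antitone fun k => dist (w k) u) {φ : ℕ → ℕ} (hφ : StrictMono φ)
    (h : Tendsto (w ∘ φ) atTop (𝓝 u)) : Tendsto w atTop (𝓝 u) := by
  rw [tendsto_iff_dist_tendsto_zero] at h ⊢
  have hinf := tendsto_atTop_ciInf hw ⟨0, by rintro _ ⟨k, rfl⟩; exact dist_nonneg⟩
  rwa [tendsto_nhds_unique (hinf.comp hφ.tendsto_atTop) h] at hinf

variable {F : Type*} [NormedAddCommGroup F] [InnerProductSpace ℝ F]

theorem norm_add_smul_sub_sq (a b : F) (t : ℝ) :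
    ‖a + t • (b - a)‖ ^ 2 = (1 - t) * ‖a‖ ^ 2 + t * ‖b‖ ^ 2 - t * (1 - t) * ‖b - a‖ ^ 2 := by
  simp only [← real_inner_self_eq_norm_sq, inner_add_left, inner_add_right, inner_sub_left,
    inner_sub_right, real_inner_smul_left, real_inner_smul_right, real_inner_comm a b]
  ring

variable {T : F → F} {t : ℝ} {w u : F}

theorem LipschitzWith.norm_krasnoselskiiMann_step_sub_sq_le (hT : LipschitzWith 1 T)
    (hu : IsFixedPt T u) (ht : t ∈ Set.Icc (0 : ℝ) 1) :
    ‖w + t • (T w - w) - u‖ ^ 2 ≤ ‖w - u‖ ^ 2 - t * (1 - t) * ‖T w - w‖ ^ 2 := by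
  have hTw : ‖T w - u‖ ≤ ‖w - u‖ := by
    simpa [hu.eq, dist_eq_norm] using hT.dist_le_mul w u
  have hsq := pow_le_pow_left₀ (norm_nonneg _) hTw 2
  have hsplit : w + t • (T w - w) - u = (w - u) + t • ((T w - u) - (w - u)) := by module
  rw [hsplit, norm_add_smul_sub_sq, sub_sub_sub_cancel_right]
  nlinarith [ht.1, ht.2]

theorem LipschitzWith.norm_krasnoselskiiMann_step_residual_le (hT : LipschitzWith 1 T)
    (ht : t ∈ Set.Icc (0 : ℝ) 1) :
    ‖T (w + t • (T w - w)) - (w + t • (T w - w))‖ ≤ ‖T w - w‖ := by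
  set w' := w + t • (T w - w)
  have hTw' : ‖T w' - T w‖ ≤ t * ‖T w - w‖ := by
    have := hT.dist_le_mul w' w
    simp only [NNReal.coe_one, one_mul, dist_eq_norm] at this
    simpa [w', norm_smul, abs_of_nonneg ht.1] using this
  calc ‖T w' - w'‖ = ‖(T w' - T w) + (1 - t) • (T w - w)‖ := by congr 1; simp only [w']; module
    _ ≤ t * ‖T w - w‖ + (1 - t) * ‖T w - w‖ := by
        refine (norm_add_le _ _).trans (add_le_add hTw' ?_)
        rw [norm_smul, Real.norm_of_nonneg (sub_nonneg.mpr ht.2)]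
    _ = ‖T w - w‖ := by ring

theorem LipschitzWith.exists_isFixedPt_tendsto_krasnoselskiiMann [ProperSpace F]
    (hT : LipschitzWith 1 T) (hfix : ∃ u, IsFixedPt T u) {α : ℕ → ℝ}
    (hα : ∀ k, α k ∈ Set.Icc (0 : ℝ) 1)
    (hdiv : Tendsto (fun N => ∑ k ∈ range N, α k * (1 - α k)) atTop atTop) {w : ℕ → F}
    (hw : ∀ k, w (k + 1) = w k + α k • (T (w k) - w k)) :
    ∃ u, IsFixedPt T u ∧ Tendsto w atTop (𝓝 u) := by
  obtain ⟨u₀, hu₀⟩ := hfix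
  have hweight : ∀ k, 0 ≤ α k * (1 - α k) := fun k => mul_nonneg (hα k).1 (by linarith [(hα k).2])
  have hstep : ∀ u, IsFixedPt T u → ∀ k,
      ‖w (k + 1) - u‖ ^ 2 ≤ ‖w k - u‖ ^ 2 - α k * (1 - α k) * ‖T (w k) - w k‖ ^ 2 :=
    fun u hu k => hw k ▸ hT.norm_krasnoselskiiMann_step_sub_sq_le hu (hα k)
  have hfejer : ∀ u, IsFixedPt T u → Antitone fun k => dist (w k) u := by
    refine fun u hu => antitone_nat_of_succ_le fun k => ?_
    simp only [dist_eq_norm]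
    refine le_of_pow_le_pow_left₀ two_ne_zero (norm_nonneg _) ((hstep u hu k).trans ?_)
    nlinarith [hweight k, sq_nonneg ‖T (w k) - w k‖]
  have hsum : ∀ N, ∑ k ∈ range N, α k * (1 - α k) * ‖T (w k) - w k‖ ^ 2 ≤ ‖w 0 - u₀‖ ^ 2 := by
    suffices ∀ N, ∑ k ∈ range N, α k * (1 - α k) * ‖T (w k) - w k‖ ^ 2 + ‖w N - u₀‖ ^ 2
        ≤ ‖w 0 - u₀‖ ^ 2 from fun N => by nlinarith [this N, sq_nonneg ‖w N - u₀‖]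
    intro N
    induction N with
    | zero => simp
    | succ N ih => rw [sum_range_succ]; linarith [hstep u₀ hu₀ N]
  have hresidual : Tendsto (fun k => ‖T (w k) - w k‖ ^ 2) atTop (𝓝 0) := by
    refine tendsto_zero_of_antitone_of_sum_mul_le hweight ?_ (fun k => sq_nonneg _) hsum hdiv
    refine antitone_nat_of_succ_le fun k => pow_le_pow_left₀ (norm_nonneg _) ?_ 2
    rw [hw k]
    exact hT.norm_krasnoselskiiMann_step_residual_le (hα k)
  obtain ⟨u, -, φ, hφ, hlim⟩ := tendsto_subseq_of_bounded (Metric.isBounded_closedBall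
    (x := u₀) (r := dist (w 0) u₀)) fun k => hfejer u₀ hu₀ (Nat.zero_le k)
  have hu : IsFixedPt T u := by
    have hlim' : Tendsto (fun k => ‖T (w (φ k)) - w (φ k)‖ ^ 2) atTop (𝓝 (‖T u - u‖ ^ 2)) :=
      (((hT.continuous.tendsto u).comp hlim).sub hlim).norm.pow 2
    have := tendsto_nhds_unique hlim' (hresidual.comp hφ.tendsto_atTop)
    exact sub_eq_zero.mp (norm_eq_zero.mp (pow_eq_zero_iff two_ne_zero |>.mp this))
  exact ⟨u, hu, tendsto_of_antitone_dist_of_subseq (hfejer u hu) hφ hlim⟩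

end KrasnoselskiiMann

section Prox

theorem nonneg_of_forall_nonneg_add_mul {a b : ℝ} (h : ∀ t ∈ Set.Ioc (0 : ℝ) 1, 0 ≤ a + t * b) :
    0 ≤ a := by
  have hlim : Tendsto (fun t : ℝ => a + t * b) (𝓝[>] 0) (𝓝 a) := by
    have : Continuous fun t : ℝ => a + t * b := by fun_prop
    simpa using (this.tendsto 0).mono_left nhdsWithin_le_nhds
  refine ge_of_tendsto hlim ?_
  filter_upwards [Ioc_mem_nhdsGT zero_lt_one] using h

variable {n : ℕ} {J G : E n → EReal} {γ : ℝ} {x y p q : E n}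

theorem ProperE.coe_toReal (hJ : ProperE J) (hy : J y ≠ ⊤) : ((J y).toReal : EReal) = J y :=
  EReal.coe_toReal hy (hJ.2 y)

theorem ConvexE.toReal_le (hJ : ProperE J) (hc : ConvexE J) (hp : J p ≠ ⊤) (hq : J q ≠ ⊤)
    {t : ℝ} (ht₀ : 0 ≤ t) (ht₁ : t ≤ 1) :
    J ((1 - t) • p + t • q) ≠ ⊤ ∧
      (J ((1 - t) • p + t • q)).toReal ≤ (1 - t) * (J p).toReal + t * (J q).toReal := by
  have h := hc p q (1 - t) t (by linarith) ht₀ (by ring)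
  rw [← hJ.coe_toReal hp, ← hJ.coe_toReal hq, ← EReal.coe_mul, ← EReal.coe_mul,
    ← EReal.coe_add] at h
  have hne := ne_top_of_le_ne_top (EReal.coe_ne_top _) h
  rw [← hJ.coe_toReal hne] at h
  exact ⟨hne, EReal.coe_le_coe_iff.mp h⟩

theorem IsProx.ne_top_s17 (hJ : ProperE J) (hγ : 0 < γ) (h : IsProx J γ x p) : J p ≠ ⊤ := by
  obtain ⟨y, hy⟩ := hJ.1
  intro hp
  have h' := h y
  rw [hp, ← hJ.coe_toReal hy, EReal.coe_mul_top_of_pos (by exact_mod_cast hγ), EReal.top_add_coe,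
    ← EReal.coe_mul, ← EReal.coe_add] at h'
  exact (EReal.coe_lt_top _).not_ge h'

theorem IsProx.toReal_le (hJ : ProperE J) (h : IsProx J γ x p) (hp : J p ≠ ⊤) (hy : J y ≠ ⊤) :
    γ * (J p).toReal + ‖p - x‖ ^ 2 / 2 ≤ γ * (J y).toReal + ‖y - x‖ ^ 2 / 2 := by
  have h' := h y
  rw [← hJ.coe_toReal hp, ← hJ.coe_toReal hy] at h'
  exact_mod_cast h'

theorem IsProx.inner_le (hJ : ProperE J) (hc : ConvexE J) (hγ : 0 < γ) (h : IsProx J γ x p)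
    (hq : J q ≠ ⊤) : inner ℝ (x - p) (q - p) ≤ γ * ((J q).toReal - (J p).toReal) := by
  have hp := h.ne_top_s17 hJ hγ
  refine sub_nonneg.mp (nonneg_of_forall_nonneg_add_mul (b := ‖q - p‖ ^ 2 / 2) fun t ht => ?_)
  obtain ⟨hne, hconv⟩ := hc.toReal_le hJ hp hq ht.1.le ht.2
  have hprox := h.toReal_le hJ hp hne
  have hnorm : ‖(1 - t) • p + t • q - x‖ ^ 2
      = ‖p - x‖ ^ 2 - 2 * t * inner ℝ (x - p) (q - p) + t ^ 2 * ‖q - p‖ ^ 2 := by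
    rw [show (1 - t) • p + t • q - x = (p - x) + t • (q - p) by module, norm_add_sq_real,
      real_inner_smul_right, norm_smul, mul_pow, Real.norm_eq_abs, sq_abs, ← neg_sub x p,
      inner_neg_left]
    ring
  refine (mul_nonneg_iff_of_pos_left ht.1).mp ?_
  nlinarith [mul_le_mul_of_nonneg_left hconv hγ.le]

theorem IsProx.norm_sub_sq_le_inner (hJ : ProperE J) (hc : ConvexE J) (hγ : 0 < γ)
    (hp : IsProx J γ x p) (hq : IsProx J γ y q) : ‖p - q‖ ^ 2 ≤ inner ℝ (p - q) (x - y) := by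
  have h₁ := hp.inner_le hJ hc hγ (hq.ne_top_s17 hJ hγ)
  have h₂ := hq.inner_le hJ hc hγ (hp.ne_top_s17 hJ hγ)
  rw [← real_inner_self_eq_norm_sq]
  simp only [inner_sub_left, inner_sub_right] at h₁ h₂ ⊢
  linarith [real_inner_comm p q, real_inner_comm x p, real_inner_comm x q, real_inner_comm y p,
    real_inner_comm y q]

theorem IsProx.isSubgrad_s17 (hJ : ProperE J) (hc : ConvexE J) (hγ : 0 < γ) (h : IsProx J γ x p) :
    IsSubgrad J p (γ⁻¹ • (x - p)) := by
  intro y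
  by_cases hy : J y = ⊤
  · rw [hy]; exact le_top
  have hle : γ⁻¹ * inner ℝ (x - p) (y - p) ≤ (J y).toReal - (J p).toReal :=
    (inv_mul_le_iff₀ hγ).mpr (h.inner_le hJ hc hγ hy)
  rw [← hJ.coe_toReal hy, ← hJ.coe_toReal (h.ne_top_s17 hJ hγ), ← EReal.coe_add,
    EReal.coe_le_coe_iff, real_inner_smul_left]
  linarith

theorem IsSubgrad.add_le_add {u : E n} (hJ : IsSubgrad J p u) (hG : IsSubgrad G p (-u))
    (y : E n) : J p + G p ≤ J y + G y :=
  calc J p + G p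
      = (J p + ((inner ℝ u (y - p) : ℝ) : EReal)) + (G p + ((inner ℝ (-u) (y - p) : ℝ) : EReal)) := by
        rw [add_add_add_comm, ← EReal.coe_add, inner_neg_left, add_neg_cancel, EReal.coe_zero,
          add_zero]
    _ ≤ J y + G y := _root_.add_le_add (hJ y) (hG y)

theorem IsProx.add_le_add_of_isProx_two_smul_sub (hJ : ProperE J) (hJc : ConvexE J)
    (hG : ProperE G) (hGc : ConvexE G) (hγ : 0 < γ) (hpJ : IsProx J γ x p)
    (hpG : IsProx G γ ((2 : ℝ) • p - x) p) (y : E n) : J p + G p ≤ J y + G y := by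
  have hsub := hpG.isSubgrad_s17 hG hGc hγ
  rw [show γ⁻¹ • ((2 : ℝ) • p - x - p) = -(γ⁻¹ • (x - p)) by module] at hsub
  exact (hpJ.isSubgrad_s17 hJ hJc hγ).add_le_add hsub y

end Prox

theorem tendsto_sum_shifted_relaxation_atTop {lam : ℕ → ℝ}
    (h : Tendsto (fun N => ∑ k ∈ range N, lam k * (2 - lam k)) atTop atTop) :
    Tendsto (fun N => ∑ k ∈ range N, lam (k + 1) / 2 * (1 - lam (k + 1) / 2)) atTop atTop := by
  have hshift N : (∑ k ∈ range (N + 1), lam k * (2 - lam k) + -(lam 0 * (2 - lam 0))) / 4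
      = ∑ k ∈ range N, lam (k + 1) / 2 * (1 - lam (k + 1) / 2) := by
    rw [sum_range_succ', add_neg_cancel_right, sum_div]
    exact sum_congr rfl fun k _ => by ring
  exact ((tendsto_atTop_add_const_right _ _ (h.comp (tendsto_add_atTop_nat 1))).atTop_div_const
    four_pos).congr hshift

theorem statement17_general {n : ℕ} (J G : E n → EReal)
    (hJproper : ProperE J) (hJconv : ConvexE J)
    (hGproper : ProperE G) (hGconv : ConvexE G)
    (γ : ℝ) (hγ : 0 < γ)
    (pJ pG : E n → E n)
    (hpJ : ∀ w : E n, IsProx J γ w (pJ w))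
    (hpG : ∀ w : E n, IsProx G γ w (pG w))
    (lam : ℕ → ℝ) (hlam : ∀ k, 0 < lam k ∧ lam k ≤ 2)
    (hdiv : Tendsto (fun N => ∑ k ∈ Finset.range N, lam k * (2 - lam k)) atTop atTop)
    (z x v : ℕ → E n)
    (hv : ∀ k, v (k + 1) = pG ((2 : ℝ) • x k - z k))
    (hz : ∀ k, z (k + 1) = (1 - lam k) • z k + lam k • (z k + v (k + 1) - x k))
    (hx : ∀ k, x (k + 1) = pJ (z (k + 1)))
    (hfix : ∃ zf : E n,
      (1 / 2 : ℝ) • (((2 : ℝ) • pG ((2 : ℝ) • pJ zf - zf) - ((2 : ℝ) • pJ zf - zf)) + zf)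
        = zf) :
    ∃ zs : E n,
      Tendsto z atTop (𝓝 zs) ∧
      (1 / 2 : ℝ) • (((2 : ℝ) • pG ((2 : ℝ) • pJ zs - zs) - ((2 : ℝ) • pJ zs - zs)) + zs)
        = zs ∧
      Tendsto x atTop (𝓝 (pJ zs)) ∧
      Tendsto v atTop (𝓝 (pJ zs)) ∧
      ∀ y : E n, J (pJ zs) + G (pJ zs) ≤ J y + G y := by
  have hJfirm a b := (hpJ a).norm_sub_sq_le_inner hJproper hJconv hγ (hpJ b)
  have hGfirm a b := (hpG a).norm_sub_sq_le_inner hGproper hGconv hγ (hpG b)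
  have hRJ := lipschitzWith_one_reflected hJfirm
  have hT : LipschitzWith 1 (reflected pG ∘ reflected pJ) := by
    simpa using (lipschitzWith_one_reflected hGfirm).comp hRJ
  have hα k : lam (k + 1) / 2 ∈ Set.Icc (0 : ℝ) 1 := by constructor <;> linarith [hlam (k + 1)]
  -- `x 0` is arbitrary, so the recursion in `z` only holds from `z 1` on.
  have hrec k : z (k + 1 + 1) = z (k + 1) + (lam (k + 1) / 2) •
      ((reflected pG ∘ reflected pJ) (z (k + 1)) - z (k + 1)) := by
    rw [hz, hv, hx]; simp only [comp_apply, reflected]; module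
  obtain ⟨zs, hzs, hlim⟩ := hT.exists_isFixedPt_tendsto_krasnoselskiiMann
    (hfix.imp fun _ => half_smul_add_eq_self_iff.mp) hα (tendsto_sum_shifted_relaxation_atTop hdiv) (w := fun k => z (k + 1)) hrec
  have hpGzs : pG (reflected pJ zs) = pJ zs := reflected_reflected_eq_self_iff.mp hzs
  have hproxG : IsProx G γ (reflected pJ zs) (pJ zs) := hpGzs ▸ hpG _
  refine ⟨zs, (tendsto_add_atTop_iff_nat 1).mp hlim, half_smul_add_eq_self_iff.mpr hzs, ?_, ?_,
    (hpJ zs).add_le_add_of_isProx_two_smul_sub hJproper hJconv hGproper hGconv hγ hproxG⟩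
  · refine (tendsto_add_atTop_iff_nat 1).mp ?_
    simp only [hx]
    exact ((lipschitzWith_one_of_firmly_nonexpansive hJfirm).continuous.tendsto zs).comp hlim
  · refine (tendsto_add_atTop_iff_nat 2).mp ?_
    have hcont := (lipschitzWith_one_of_firmly_nonexpansive hGfirm).continuous.comp
      hRJ.continuous
    simp only [hv, hx]
    rw [← hpGzs]
    exact (hcont.tendsto zs).comp hlim

/-- Global convergence of the relaxed Douglas–Rachford iteration:
with `pJ = prox_{γJ}`, `pG = prox_{γG}`, relaxation parameters `λ_k ∈ (0,2]` with
`Σ_k λ_k(2 − λ_k) = +∞`, and iterates `v^{k+1} = prox_{γG}(2x^k − z^k)`,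
`z^{k+1} = (1 − λ_k) z^k + λ_k (z^k + v^{k+1} − x^k)`, `x^{k+1} = prox_{γJ}(z^{k+1})`, and
assuming the DR operator `B = ½(R_{γG} ∘ R_{γJ} + I)` has a fixed point, the sequence `z^k`
converges to a fixed point `z*` of `B`, `x^k` and `v^k` converge to `x* = prox_{γJ}(z*)`,
and `x*` globally minimizes `J + G`. -/
theorem statement17 {n : ℕ} (J G : E n → EReal)
    (hJproper : ProperE J) (hJlsc : LowerSemicontinuous J) (hJconv : ConvexE J)
    (hGproper : ProperE G) (hGlsc : LowerSemicontinuous G) (hGconv : ConvexE G)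
    (γ : ℝ) (hγ : 0 < γ)
    (pJ pG : E n → E n)
    (hpJ : ∀ w : E n, IsProx J γ w (pJ w))
    (hpG : ∀ w : E n, IsProx G γ w (pG w))
    (lam : ℕ → ℝ) (hlam : ∀ k, 0 < lam k ∧ lam k ≤ 2)
    (hdiv : Tendsto (fun N => ∑ k ∈ Finset.range N, lam k * (2 - lam k)) atTop atTop)
    (z x v : ℕ → E n)
    (hv : ∀ k, v (k + 1) = pG ((2 : ℝ) • x k - z k))
    (hz : ∀ k, z (k + 1) = (1 - lam k) • z k + lam k • (z k + v (k + 1) - x k))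
    (hx : ∀ k, x (k + 1) = pJ (z (k + 1)))
    (hfix : ∃ zf : E n,
      (1 / 2 : ℝ) • (((2 : ℝ) • pG ((2 : ℝ) • pJ zf - zf) - ((2 : ℝ) • pJ zf - zf)) + zf)
        = zf) :
    ∃ zs : E n,
      Tendsto z atTop (𝓝 zs) ∧
      (1 / 2 : ℝ) • (((2 : ℝ) • pG ((2 : ℝ) • pJ zs - zs) - ((2 : ℝ) • pJ zs - zs)) + zs)
        = zs ∧
      Tendsto x atTop (𝓝 (pJ zs)) ∧
      Tendsto v atTop (𝓝 (pJ zs)) ∧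
      ∀ y : E n, J (pJ zs) + G (pJ zs) ≤ J y + G y :=
  statement17_general J G hJproper hJconv hGproper hGconv γ hγ pJ pG hpJ hpG lam hlam hdiv z x v hv
    hz hx hfix
end
end
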